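/- arXiv:math/0511108 — 3 statements merged into one kernel-verified Lean document; each statement's English description precedes it below -/
import Mathlib

section
/- Let h be a complex-valued function defined and C¹ on a neighborhood of 0 in ℂ with h(0) = 0, and fix ζ ∈ 𝔻. Define φ(z) = −log(1 − |(ζ − h(z))/(conj(h(z))·ζ − 1)|²) for z in a neighborhood of 0 (shrinking the neighborhood so that |h(z)| < 1). Then the Wirtinger derivative of φ at z = 0 satisfies (∂φ/∂z)(0) = −conj((∂h/∂z̄)(0))·ζ − (∂h/∂z)(0)·conj(ζ). In particular, viewing (∂φ/∂z)(0) as a function of ζ ∈ 𝔻, its Wirtinger derivative ∂/∂ζ̄ is the constant −(∂h/∂z)(0). -/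
open Complex

/-- Wirtinger derivative `∂f/∂z = (1/2)(∂f/∂x − i·∂f/∂y)` of `f : ℂ → ℂ` (viewing `ℂ`
as `ℝ²`), where `∂f/∂x` (resp. `∂f/∂y`) is the real directional derivative in the
direction `1` (resp. `i`). -/
noncomputable def wirtingerZ (f : ℂ → ℂ) (z : ℂ) : ℂ :=
  (1 / 2) * (fderiv ℝ f z 1 - Complex.I * fderiv ℝ f z Complex.I)

/-- Wirtinger derivative `∂f/∂z̄ = (1/2)(∂f/∂x + i·∂f/∂y)`. -/
noncomputable def wirtingerZbar (f : ℂ → ℂ) (z : ℂ) : ℂ :=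
  (1 / 2) * (fderiv ℝ f z 1 + Complex.I * fderiv ℝ f z Complex.I)

/-!
The Möbius identity `1 - ‖(ζ - w) / (w̄ζ - 1)‖² = (1 - ‖w‖²)(1 - ‖ζ‖²) / ‖w̄ζ - 1‖²` splits
`φ = log ‖ζ̄h - 1‖² - log (1 - ‖h‖²) - log (1 - ‖ζ‖²)`. As `h 0 = 0`, the middle term is critical
at `0` and the real differential of the first is `v ↦ -2 ⟪ζ, dh v⟫_ℝ = -2 Re (ζ̄ dh v)`, whose
`∂/∂z` is `-(ζ̄ h_z + ζ conj h_z̄)`. This is `ℝ`-linear in `ζ`, so its `∂/∂ζ̄` is `-h_z`.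
-/

open ComplexConjugate Filter Metric Topology

theorem one_sub_norm_div_conj_mul_sub_one_sq {w ζ : ℂ} (hd : conj w * ζ - 1 ≠ 0) :
    1 - ‖(ζ - w) / (conj w * ζ - 1)‖ ^ 2 =
      (1 - ‖w‖ ^ 2) * (1 - ‖ζ‖ ^ 2) / ‖conj w * ζ - 1‖ ^ 2 := by
  have hd' : ‖conj w * ζ - 1‖ ^ 2 ≠ 0 := by positivity
  rw [norm_div, div_pow, one_sub_div hd', div_left_inj' hd']
  simp only [Complex.sq_norm, normSq_apply, sub_re, sub_im, mul_re, mul_im, conj_re, conj_im,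
    one_re, one_im]
  ring

theorem conj_mul_sub_one_ne_zero {w ζ : ℂ} (hw : ‖w‖ < 1) (hζ : ‖ζ‖ < 1) :
    conj w * ζ - 1 ≠ 0 := by
  rw [sub_ne_zero]
  refine ne_of_apply_ne norm (ne_of_lt ?_)
  rw [norm_mul, norm_conj, norm_one]
  exact mul_lt_one_of_nonneg_of_lt_one_left (norm_nonneg w) hw hζ.le

theorem neg_log_one_sub_norm_div_conj_mul_sub_one_sq {w ζ : ℂ} (hw : ‖w‖ < 1) (hζ : ‖ζ‖ < 1) :
    -Real.log (1 - ‖(ζ - w) / (conj w * ζ - 1)‖ ^ 2) =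
      Real.log (‖conj ζ * w - 1‖ ^ 2) - Real.log (1 - ‖w‖ ^ 2) - Real.log (1 - ‖ζ‖ ^ 2) := by
  have hd := conj_mul_sub_one_ne_zero hw hζ
  have hnorm : ‖conj w * ζ - 1‖ = ‖conj ζ * w - 1‖ := by
    rw [← norm_conj]; simp [mul_comm]
  have hw' : 0 < 1 - ‖w‖ ^ 2 := by nlinarith [norm_nonneg w]
  have hζ' : 0 < 1 - ‖ζ‖ ^ 2 := by nlinarith [norm_nonneg ζ]
  rw [one_sub_norm_div_conj_mul_sub_one_sq hd, ← hnorm,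
    Real.log_div (by positivity) (by simpa using hd), Real.log_mul hw'.ne' hζ'.ne']
  ring

theorem hasFDerivAt_neg_log_one_sub_norm_div_conj_mul_sub_one_sq {h : ℂ → ℂ} {A : ℂ →L[ℝ] ℂ}
    {z₀ ζ : ℂ} (hA : HasFDerivAt h A z₀) (hz₀ : h z₀ = 0) (hζ : ‖ζ‖ < 1) :
    HasFDerivAt (fun z => -Real.log (1 - ‖(ζ - h z) / (conj (h z) * ζ - 1)‖ ^ 2))
      ((innerSL ℝ (-2 * ζ)).comp A) z₀ := by
  have hsmall : ∀ᶠ z in 𝓝 z₀, ‖h z‖ < 1 :=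
    hA.continuousAt.norm.eventually_lt continuousAt_const (by simp [hz₀])
  have hnum : HasFDerivAt (fun z => Real.log (‖conj ζ * h z - 1‖ ^ 2))
      ((innerSL ℝ (-2 * ζ)).comp A) z₀ := by
    refine (((hA.const_mul (conj ζ)).sub_const 1).norm_sq.log (by simp [hz₀])).congr_fderiv ?_
    ext v
    simp only [hz₀, mul_zero, zero_sub, norm_neg, norm_one, one_pow, inv_one, map_neg,
      ContinuousLinearMap.neg_comp, smul_neg, one_smul, neg_apply, smul_apply,
      ContinuousLinearMap.comp_apply, smul_eq_mul, coe_innerSL_apply, Complex.inner, map_one,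
      mul_one, mul_re, conj_re, conj_im, neg_mul, sub_neg_eq_add, smul_add, nsmul_eq_mul,
      Nat.cast_ofNat, neg_add_rev, map_mul, re_ofNat, im_ofNat, neg_zero, mul_neg, zero_mul,
      sub_zero, mul_im, add_zero]
    ring
  have hden : HasFDerivAt (fun z => Real.log (1 - ‖h z‖ ^ 2)) (0 : ℂ →L[ℝ] ℝ) z₀ := by
    simpa [hz₀] using (hA.norm_sq.const_sub 1).log (by simp [hz₀])
  refine (((hnum.sub hden).sub_const (Real.log (1 - ‖ζ‖ ^ 2))).congr_of_eventuallyEq ?_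
    ).congr_fderiv (sub_zero _)
  filter_upwards [hsmall] with z hz
  exact neg_log_one_sub_norm_div_conj_mul_sub_one_sq hz hζ

theorem wirtingerZ_ofReal_of_hasFDerivAt_innerSL_comp {g : ℂ → ℝ} {h : ℂ → ℂ} {z c : ℂ}
    (hg : HasFDerivAt g ((innerSL ℝ c).comp (fderiv ℝ h z)) z) :
    wirtingerZ (fun w => (g w : ℂ)) z =
      (conj c * wirtingerZ h z + c * conj (wirtingerZbar h z)) / 2 := by
  have hg' : HasFDerivAt (fun w => (g w : ℂ))
      (ofRealCLM.comp ((innerSL ℝ c).comp (fderiv ℝ h z))) z :=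
    ofRealCLM.hasFDerivAt.comp z hg
  rw [wirtingerZ, hg'.fderiv, wirtingerZ, wirtingerZbar]
  simp only [ContinuousLinearMap.comp_apply, ofRealCLM_apply, innerSL_apply_apply,
    Complex.inner, re_eq_add_conj, map_mul, map_add, map_div₀, map_one, map_ofNat,
    conj_conj, conj_I]
  ring

theorem wirtingerZbar_congr_of_eventuallyEq {f g : ℂ → ℂ} {z : ℂ} (hfg : f =ᶠ[𝓝 z] g) :
    wirtingerZbar f z = wirtingerZbar g z := by
  rw [wirtingerZbar, wirtingerZbar, hfg.fderiv_eq]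

theorem wirtingerZbar_mul_sub_mul_conj (p q z : ℂ) :
    wirtingerZbar (fun w => p * w - q * conj w) z = -q := by
  have hd : HasFDerivAt (fun w => p * w - q * conj w)
      (p • ContinuousLinearMap.id ℝ ℂ - q • (conjCLE : ℂ →L[ℝ] ℂ)) z :=
    ((hasFDerivAt_id z).const_mul p).sub (conjCLE.hasFDerivAt.const_mul q)
  rw [wirtingerZbar, hd.fderiv]
  simp only [sub_apply, smul_apply, ContinuousLinearMap.id_apply, ContinuousLinearEquiv.coe_coe,
    conjCLE_apply, map_one, conj_I, smul_eq_mul]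
  linear_combination (p + q) / 2 * I_sq

/-- Let `h` be `C¹` near `0` with `h(0) = 0`, fix `ζ ∈ 𝔻`, and set
`φ(z) = −log(1 − |(ζ − h(z))/(conj(h(z))·ζ − 1)|²)`. Then
`(∂φ/∂z)(0) = −conj(h_z̄(0))·ζ − h_z(0)·conj(ζ)`; in particular, viewed as a function
of `ζ ∈ 𝔻`, the `∂/∂ζ̄`-derivative of `(∂φ/∂z)(0)` is the constant `−h_z(0)`. -/
theorem wirtinger_z_zetabar_of_phi (U : Set ℂ) (hU : IsOpen U) (h0U : (0 : ℂ) ∈ U)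
    (h : ℂ → ℂ) (hC1 : ContDiffOn ℝ 1 h U) (hh0 : h 0 = 0)
    (ζ : ℂ) (hζ : ζ ∈ Metric.ball (0 : ℂ) 1) :
    wirtingerZ (fun z : ℂ =>
        ((-Real.log (1 - ‖(ζ - h z) / ((starRingEnd ℂ) (h z) * ζ - 1)‖ ^ 2) : ℝ) : ℂ)) 0 =
      -(starRingEnd ℂ) (wirtingerZbar h 0) * ζ - wirtingerZ h 0 * (starRingEnd ℂ) ζ ∧
    ∀ w ∈ Metric.ball (0 : ℂ) 1,
      wirtingerZbar (fun w' : ℂ =>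
          wirtingerZ (fun z : ℂ =>
            ((-Real.log (1 - ‖(w' - h z) / ((starRingEnd ℂ) (h z) * w' - 1)‖ ^ 2) : ℝ) : ℂ)) 0)
        w = -(wirtingerZ h 0) := by
  have hh : HasFDerivAt h (fderiv ℝ h 0) 0 :=
    ((hC1.differentiableOn one_ne_zero).differentiableAt (hU.mem_nhds h0U)).hasFDerivAt
  have hφ : ∀ w ∈ ball (0 : ℂ) 1,
      wirtingerZ (fun z : ℂ =>
          ((-Real.log (1 - ‖(w - h z) / (conj (h z) * w - 1)‖ ^ 2) : ℝ) : ℂ)) 0 =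
        -conj (wirtingerZbar h 0) * w - wirtingerZ h 0 * conj w := fun w hw => by
    rw [wirtingerZ_ofReal_of_hasFDerivAt_innerSL_comp
      (hasFDerivAt_neg_log_one_sub_norm_div_conj_mul_sub_one_sq hh hh0 (mem_ball_zero_iff.1 hw))]
    simp only [map_mul, map_neg, map_ofNat]
    ring
  refine ⟨hφ ζ hζ, fun w hw => ?_⟩
  rw [wirtingerZbar_congr_of_eventuallyEq (eventually_of_mem (isOpen_ball.mem_nhds hw) hφ),
    wirtingerZbar_mul_sub_mul_conj]
end

section
/- For all a, b, ζ ∈ ℂ with |ζ| < 1, the following identity holds: (|a|² + |b|² − 2·Re(conj(ζ)²·a·b))·(1 − |ζ|²)^{−2} − |a|² = (1 − |ζ|²)^{−2}·( 2|ζ|²(1 − |ζ|²)|a|² + |conj(ζ)²·a − conj(b)|² ). -/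
/-! Expanding `|conj(ζ)²·a − conj(b)|² = |ζ|⁴|a|² + |b|² − 2·Re(conj(ζ)²·a·b)` reduces the identity to
the comparison of the coefficients of `|a|²`, which is `1 − (1 − s)² = 2s(1 − s) + s²` for `s = |ζ|²`. -/

open Complex

theorem Complex.sq_norm_mul_sub_conj (w a b : ℂ) :
    ‖w * a - (starRingEnd ℂ) b‖ ^ 2 = ‖w‖ ^ 2 * ‖a‖ ^ 2 + ‖b‖ ^ 2 - 2 * (w * a * b).re := by
  simp only [Complex.sq_norm, normSq_sub, normSq_mul, normSq_conj, conj_conj]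

/-- The determinant identity for the Levi form: for all `a, b, ζ ∈ ℂ` with `|ζ| < 1`,
`(|a|² + |b|² − 2·Re(conj(ζ)²·a·b))·(1 − |ζ|²)^{−2} − |a|²
  = (1 − |ζ|²)^{−2}·(2|ζ|²(1 − |ζ|²)|a|² + |conj(ζ)²·a − conj(b)|²)`. -/
theorem levi_determinant_identity (a b ζ : ℂ) (hζ : ‖ζ‖ < 1) :
    (‖a‖ ^ 2 + ‖b‖ ^ 2 - 2 * ((starRingEnd ℂ) ζ ^ 2 * a * b).re) *
        ((1 - ‖ζ‖ ^ 2) ^ 2)⁻¹ - ‖a‖ ^ 2 =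
      ((1 - ‖ζ‖ ^ 2) ^ 2)⁻¹ *
        (2 * ‖ζ‖ ^ 2 * (1 - ‖ζ‖ ^ 2) * ‖a‖ ^ 2 +
          ‖(starRingEnd ℂ) ζ ^ 2 * a - (starRingEnd ℂ) b‖ ^ 2) := by
  -- without this, `((1 - ‖ζ‖ ^ 2) ^ 2)⁻¹` could be the junk value `0⁻¹ = 0` and the identity fails
  have hd : 1 - ‖ζ‖ ^ 2 ≠ 0 := by
    have : ‖ζ‖ ^ 2 < 1 := pow_lt_one₀ (norm_nonneg ζ) hζ two_ne_zero
    linarith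
  rw [Complex.sq_norm_mul_sub_conj, norm_pow, RCLike.norm_conj]
  field_simp
  ring
end

section
/- For all a, b, ζ ∈ ℂ with 0 < |ζ| < 1 and a ≠ 0, setting A = |a|² + |b|² − 2·Re(conj(ζ)²·a·b), one has A > 0 and A·(1 − |ζ|²)^{−2} − |a|² > 0; that is, the 2×2 Hermitian matrix with diagonal entries A and (1 − |ζ|²)^{−2} and off-diagonal entries −a and −conj(a) is positive definite. -/
open Complex
open scoped ComplexOrder

/-!
Write `t = |ζ|²`. Since `Re(conj(ζ)²·a·b) ≤ t|a||b|`, we get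
`A ≥ (|b| − t|a|)² + (1 − t²)|a|² > (1 − t)²|a|²`, the last step because `0 < t < 1`.
Hence `A > 0` and the determinant `A(1 − t)⁻² − |a|²` is positive, and a Hermitian `2×2` matrix
with positive diagonal entry and positive determinant is positive definite.
-/

theorem quadratic_pos_of_sq_lt_mul {A C r p q : ℝ} (hA : 0 < A) (hr : r ^ 2 < A * C)
    (hpq : p ≠ 0 ∨ q ≠ 0) : 0 < A * p ^ 2 + C * q ^ 2 - 2 * r * p * q := by
  have hsq : A * (A * p ^ 2 + C * q ^ 2 - 2 * r * p * q)
      = (A * p - r * q) ^ 2 + (A * C - r ^ 2) * q ^ 2 := by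
    ring
  refine pos_of_mul_pos_right (hsq ▸ ?_) hA.le
  rcases eq_or_ne q 0 with rfl | hq
  · have hp : p ≠ 0 := hpq.resolve_right (not_not.2 rfl)
    simp only [mul_zero, sub_zero, zero_pow two_ne_zero, add_zero]
    positivity
  · have := mul_pos (sub_pos.2 hr) (by positivity : 0 < q ^ 2)
    positivity

open Matrix in
theorem Matrix.posDef_fin_two_of_norm_sq_lt {𝕜 : Type*} [RCLike 𝕜] {A C : ℝ} {z : 𝕜}
    (hA : 0 < A) (hz : ‖z‖ ^ 2 < A * C) : (!![(A : 𝕜), z; star z, (C : 𝕜)]).PosDef := by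
  have hHerm : (!![(A : 𝕜), z; star z, (C : 𝕜)]).IsHermitian := by
    ext i j
    fin_cases i <;> fin_cases j <;> simp
  refine PosDef.of_dotProduct_mulVec_pos hHerm fun v hv => ?_
  have hform : star v ⬝ᵥ (!![(A : 𝕜), z; star z, (C : 𝕜)] *ᵥ v)
      = ((A * ‖v 0‖ ^ 2 + C * ‖v 1‖ ^ 2 + 2 * RCLike.re (z * star (v 0) * v 1) : ℝ) : 𝕜) := by
    push_cast
    rw [← RCLike.conj_mul, ← RCLike.conj_mul, ← RCLike.add_conj]
    simp only [dotProduct, Pi.star_apply, RCLike.star_def, mulVec, of_apply, cons_val',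
      cons_val_fin_one, Fin.sum_univ_two, cons_val_zero, cons_val_one, map_mul,
      RCLike.conj_conj]
    ring
  have hcross : -(‖z‖ * ‖v 0‖ * ‖v 1‖) ≤ RCLike.re (z * star (v 0) * v 1) := by
    simpa only [norm_mul, norm_star] using
      neg_le_of_abs_le (RCLike.abs_re_le_norm (z * star (v 0) * v 1))
  have hv01 : v 0 ≠ 0 ∨ v 1 ≠ 0 := by
    contrapose! hv
    ext i
    fin_cases i <;> simp [hv]
  have hquad := quadratic_pos_of_sq_lt_mul hA hz
    (hv01.imp norm_ne_zero_iff.2 norm_ne_zero_iff.2)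
  refine RCLike.pos_iff.2 ⟨?_, hHerm.im_star_dotProduct_mulVec_self v⟩
  rw [hform, RCLike.ofReal_re]
  linarith

theorem sq_mul_one_sub_sq_lt {x t : ℝ} (y : ℝ) (hx : 0 < x) (ht : 0 < t) (ht1 : t < 1) :
    x ^ 2 * (1 - t) ^ 2 < x ^ 2 + y ^ 2 - 2 * t * x * y := by
  have hsq : x ^ 2 + y ^ 2 - 2 * t * x * y - x ^ 2 * (1 - t) ^ 2
      = (y - t * x) ^ 2 + 2 * t * (1 - t) * x ^ 2 := by
    ring
  have hgap : 0 < 2 * t * (1 - t) * x ^ 2 := by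
    have := sub_pos.2 ht1
    positivity
  linarith [sq_nonneg (y - t * x)]

/-- Positivity of the Levi form: for `a, b, ζ ∈ ℂ` with `0 < |ζ| < 1` and `a ≠ 0`,
setting `A = |a|² + |b|² − 2·Re(conj(ζ)²·a·b)`, one has `A > 0` and
`A·(1 − |ζ|²)^{−2} − |a|² > 0`; that is, the `2×2` Hermitian matrix with diagonal
entries `A`, `(1 − |ζ|²)^{−2}` and off-diagonal entries `−a`, `−conj(a)` is positive
definite. -/
theorem levi_form_posDef (a b ζ : ℂ) (hζ0 : 0 < ‖ζ‖) (hζ1 : ‖ζ‖ < 1) (ha : a ≠ 0) :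
    0 < ‖a‖ ^ 2 + ‖b‖ ^ 2 - 2 * ((starRingEnd ℂ) ζ ^ 2 * a * b).re ∧
    0 < (‖a‖ ^ 2 + ‖b‖ ^ 2 - 2 * ((starRingEnd ℂ) ζ ^ 2 * a * b).re) *
          ((1 - ‖ζ‖ ^ 2) ^ 2)⁻¹ - ‖a‖ ^ 2 ∧
    Matrix.PosDef
      !![((‖a‖ ^ 2 + ‖b‖ ^ 2 - 2 * ((starRingEnd ℂ) ζ ^ 2 * a * b).re : ℝ) : ℂ), -a;
         -(starRingEnd ℂ) a, ((((1 - ‖ζ‖ ^ 2) ^ 2)⁻¹ : ℝ) : ℂ)] := by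
  set A := ‖a‖ ^ 2 + ‖b‖ ^ 2 - 2 * ((starRingEnd ℂ) ζ ^ 2 * a * b).re
  have ht1 : ‖ζ‖ ^ 2 < 1 := pow_lt_one₀ hζ0.le hζ1 two_ne_zero
  have hcross : ((starRingEnd ℂ) ζ ^ 2 * a * b).re ≤ ‖ζ‖ ^ 2 * ‖a‖ * ‖b‖ :=
    (re_le_norm _).trans_eq (by simp only [norm_mul, norm_pow, Complex.norm_conj])
  have hgap : ‖a‖ ^ 2 * (1 - ‖ζ‖ ^ 2) ^ 2 < A :=
    (sq_mul_one_sub_sq_lt ‖b‖ (norm_pos_iff.2 ha) (by positivity) ht1).trans_le (by linarith)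
  have hA : 0 < A := lt_of_le_of_lt (by positivity) hgap
  have hdet : ‖a‖ ^ 2 < A * ((1 - ‖ζ‖ ^ 2) ^ 2)⁻¹ := by
    rwa [lt_mul_inv_iff₀ (pow_pos (sub_pos.2 ht1) 2)]
  refine ⟨hA, sub_pos.2 hdet, ?_⟩
  have hM := Matrix.posDef_fin_two_of_norm_sq_lt (z := -a) hA (by rwa [norm_neg])
  rwa [star_neg, Complex.star_def] at hM
end
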